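/- For every natural number r there exist real numbers a_1, …, a_{r+1} and a natural number N such that, for every homogeneous polynomial f of degree r in two real variables and every n ≥ N, one has S_n(f) = Σ_{j=1}^{r+1} a_j S_{n−j}(f). Moreover the coefficients a_j depend only on r, not on f. -/

import Mathlib

/-- The Stern array: `stern n k` is the entry `s(n,k)` of the Stern array,
with `s(1,1) = 1`, `s(1,k) = 0` for `k ≠ 1`, and
`s(n,2k) = s(n-1,k)`, `s(n,2k+1) = s(n-1,k) + s(n-1,k+1)`. -/
def stern : ℕ → ℤ → ℕ
  | 0, _ => 0
  | 1, k => if k = 1 then 1 else 0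
  | n + 2, k =>
    if k % 2 = 0 then stern (n + 1) (k / 2)
    else stern (n + 1) ((k - 1) / 2) + stern (n + 1) ((k + 1) / 2)

/-- For a polynomial `f` in two variables,
`S n f = ∑_{k=0}^{2^n - 1} f(s(n,k), s(n,k+1))`. -/
noncomputable def S (n : ℕ) (f : MvPolynomial (Fin 2) ℝ) : ℝ :=
  ∑ k ∈ Finset.range (2 ^ n),
    MvPolynomial.eval ![(stern n (k : ℤ) : ℝ), (stern n ((k : ℤ) + 1) : ℝ)] f

section SternAux
open MvPolynomial Finset

noncomputable def U : MvPolynomial (Fin 2) ℝ →ₗ[ℝ] MvPolynomial (Fin 2) ℝ :=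
  (aeval ![X 0, X 0 + X 1]).toLinearMap +
    (aeval ![(X 0 : MvPolynomial (Fin 2) ℝ) + X 1, X 1]).toLinearMap

lemma eval_aeval' (v : Fin 2 → ℝ) (w : Fin 2 → MvPolynomial (Fin 2) ℝ)
    (p : MvPolynomial (Fin 2) ℝ) :
    eval v (aeval w p) = eval (fun i => eval v (w i)) p := by
  rw [aeval_def, eval_eval₂]
  have : (eval v).comp (algebraMap ℝ (MvPolynomial (Fin 2) ℝ)) = RingHom.id ℝ := by
    ext x; simp [algebraMap_eq]
  rw [this, eval₂_id]

lemma eval_U (v : Fin 2 → ℝ) (g : MvPolynomial (Fin 2) ℝ) :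
    eval v (U g) = eval ![v 0, v 0 + v 1] g + eval ![v 0 + v 1, v 1] g := by
  simp only [U, LinearMap.add_apply, AlgHom.toLinearMap_apply, map_add, eval_aeval']
  have h1 : (fun i => eval v (![X 0, X 0 + X 1] i)) = ![v 0, v 0 + v 1] := by
    funext i; fin_cases i <;> simp
  have h2 : (fun i => eval v (![(X 0 : MvPolynomial (Fin 2) ℝ) + X 1, X 1] i)) = ![v 0 + v 1, v 1] := by
    funext i; fin_cases i <;> simp
  rw [h1, h2]

lemma stern_two_mul (n : ℕ) (k : ℤ) : stern (n+2) (2*k) = stern (n+1) k := by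
  rw [stern]
  rw [if_pos (by omega)]
  congr 1; omega

lemma stern_two_mul_add_one (n : ℕ) (k : ℤ) :
    stern (n+2) (2*k+1) = stern (n+1) k + stern (n+1) (k+1) := by
  rw [stern]
  rw [if_neg (by omega)]
  congr 2 <;> omega

lemma sum_range_two_mul {M : Type*} [AddCommMonoid M] (n : ℕ) (f : ℕ → M) :
    ∑ k ∈ range (2*n), f k = ∑ k ∈ range n, (f (2*k) + f (2*k+1)) := by
  induction n with
  | zero => simp
  | succ n ih =>
      rw [Nat.mul_succ, Finset.sum_range_succ, Finset.sum_range_succ, Finset.sum_range_succ, ih,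
        add_assoc]

lemma S_step (n : ℕ) (g : MvPolynomial (Fin 2) ℝ) : S (n+2) g = S (n+1) (U g) := by
  unfold S
  rw [show (2:ℕ)^(n+2) = 2 * 2^(n+1) by ring, sum_range_two_mul]
  refine Finset.sum_congr rfl fun k _ => ?_
  rw [eval_U]
  have e0 : ((2*k : ℕ) : ℤ) = 2 * (k : ℤ) := by push_cast; ring
  have e1 : ((2*k : ℕ) : ℤ) + 1 = 2 * (k : ℤ) + 1 := by push_cast; ring
  have e2 : ((2*k+1 : ℕ) : ℤ) = 2 * (k : ℤ) + 1 := by push_cast; ring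
  have e3 : ((2*k+1 : ℕ) : ℤ) + 1 = 2 * ((k : ℤ) + 1) := by push_cast; ring
  rw [e0, e2, show (2 * (k:ℤ) + 1) + 1 = 2 * ((k:ℤ)+1) by ring]
  simp only [Matrix.cons_val_zero, Matrix.cons_val_one, Matrix.head_cons]
  have w1 : (![((stern (n+2) (2*(k:ℤ)) : ℕ) : ℝ), ((stern (n+2) (2*(k:ℤ)+1) : ℕ) : ℝ)])
      = ![((stern (n+1) (k:ℤ) : ℕ) : ℝ),
          ((stern (n+1) (k:ℤ) : ℕ) : ℝ) + ((stern (n+1) ((k:ℤ)+1) : ℕ) : ℝ)] := by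
    funext i; fin_cases i <;> simp [stern_two_mul, stern_two_mul_add_one]
  have w2 : (![((stern (n+2) (2*(k:ℤ)+1) : ℕ) : ℝ), ((stern (n+2) (2*((k:ℤ)+1)) : ℕ) : ℝ)])
      = ![((stern (n+1) (k:ℤ) : ℕ) : ℝ) + ((stern (n+1) ((k:ℤ)+1) : ℕ) : ℝ),
          ((stern (n+1) ((k:ℤ)+1) : ℕ) : ℝ)] := by
    funext i; fin_cases i <;> simp [stern_two_mul, stern_two_mul_add_one]
  rw [w1, w2]

lemma U_isHomogeneous {r : ℕ} {p : MvPolynomial (Fin 2) ℝ} (hp : p.IsHomogeneous r) :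
    (U p).IsHomogeneous r := by
  have h1 : ∀ i, (![(X 0 : MvPolynomial (Fin 2) ℝ), X 0 + X 1] i).IsHomogeneous 1 := by
    intro i; fin_cases i
    · exact isHomogeneous_X _ _
    · exact (isHomogeneous_X _ _).add (isHomogeneous_X _ _)
  have h2 : ∀ i, (![(X 0 : MvPolynomial (Fin 2) ℝ) + X 1, X 1] i).IsHomogeneous 1 := by
    intro i; fin_cases i
    · exact (isHomogeneous_X _ _).add (isHomogeneous_X _ _)
    · exact isHomogeneous_X _ _
  have := (hp.aeval _ h1).add (hp.aeval _ h2)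
  simpa only [one_mul, U, LinearMap.add_apply, AlgHom.toLinearMap_apply] using this

/-- exponent vector of the `i`-th basis monomial -/
noncomputable def cvec (r i : ℕ) : Fin 2 →₀ ℕ := Finsupp.single 0 i + Finsupp.single 1 (r - i)

lemma cvec_apply0 (r i : ℕ) : cvec r i 0 = i := by simp [cvec]
lemma cvec_apply1 (r i : ℕ) : cvec r i 1 = r - i := by simp [cvec]

lemma degree_fin2 (d : Fin 2 →₀ ℕ) : d.degree = d 0 + d 1 := by
  rw [Finsupp.degree_apply]
  rw [Finset.sum_subset (Finset.subset_univ d.support)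
    (by intro x _ hx; simpa using Finsupp.notMem_support_iff.mp hx)]
  exact Fin.sum_univ_two d

lemma hrep {r : ℕ} {p : MvPolynomial (Fin 2) ℝ} (hp : p.IsHomogeneous r) :
    p = ∑ i : Fin (r+1), coeff (cvec r i) p • monomial (cvec r i) (1:ℝ) := by
  ext d
  rw [coeff_sum]
  simp only [coeff_smul, coeff_monomial, smul_eq_mul, mul_ite, mul_one, mul_zero]
  by_cases hd : d 0 + d 1 = r
  · have hle : d 0 ≤ r := by omega
    have hdc : ∀ i : Fin (r+1), cvec r i = d ↔ i = (⟨d 0, by omega⟩ : Fin (r+1)) := by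
      intro i
      constructor
      · intro h
        have := DFunLike.congr_fun h 0
        simp only [cvec_apply0] at this
        exact Fin.ext (by simpa using this)
      · rintro rfl
        ext j
        fin_cases j
        · simp [cvec_apply0]
        · simp [cvec_apply1]; omega
    simp only [hdc]
    rw [Finset.sum_ite_eq' Finset.univ (⟨d 0, by omega⟩ : Fin (r+1))
      (fun i => coeff (cvec r i) p)]
    simp only [Finset.mem_univ, if_true]
    congr 1
    ext j
    fin_cases j
    · simp [cvec_apply0]
    · simp [cvec_apply1]; omega
  · rw [hp.coeff_eq_zero (by rw [degree_fin2]; exact hd)]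
    symm
    refine Finset.sum_eq_zero fun i _ => ?_
    rw [if_neg]
    intro h
    apply hd
    have h0 := DFunLike.congr_fun h 0
    have h1 := DFunLike.congr_fun h 1
    simp only [cvec_apply0, cvec_apply1] at h0 h1
    have : (i : ℕ) ≤ r := by omega
    omega

noncomputable def Mmat (r : ℕ) : Matrix (Fin (r+1)) (Fin (r+1)) ℝ :=
  fun i j => coeff (cvec r i) (U (monomial (cvec r j) 1))

lemma phi_U {r : ℕ} {p : MvPolynomial (Fin 2) ℝ} (hp : p.IsHomogeneous r) (i : Fin (r+1)) :
    coeff (cvec r i) (U p) = (Mmat r).mulVec (fun j => coeff (cvec r j) p) i := by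
  conv_lhs => rw [hrep hp]
  rw [map_sum, coeff_sum]
  simp only [map_smul, coeff_smul, smul_eq_mul]
  rw [Matrix.mulVec]
  simp only [dotProduct, Mmat]
  exact Finset.sum_congr rfl fun j _ => mul_comm _ _

lemma pow_isHomogeneous {r : ℕ} {p : MvPolynomial (Fin 2) ℝ} (hp : p.IsHomogeneous r) (k : ℕ) :
    ((U^k) p).IsHomogeneous r := by
  induction k with
  | zero => simpa using hp
  | succ k ih =>
      rw [pow_succ', Module.End.mul_apply]
      exact U_isHomogeneous ih

lemma phi_U_pow {r : ℕ} {p : MvPolynomial (Fin 2) ℝ} (hp : p.IsHomogeneous r) (k : ℕ) :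
    (fun i : Fin (r+1) => coeff (cvec r i) ((U^k) p))
      = ((Mmat r)^k).mulVec (fun j : Fin (r+1) => coeff (cvec r j) p) := by
  induction k with
  | zero => simp [Matrix.one_mulVec]
  | succ k ih =>
      funext i
      rw [pow_succ', Module.End.mul_apply, phi_U (pow_isHomogeneous hp k) i, ih,
        Matrix.mulVec_mulVec, ← pow_succ']

lemma CH (r : ℕ) : (Mmat r)^(r+1)
    = ∑ j ∈ Finset.Icc 1 (r+1), (-(Mmat r).charpoly.coeff (r+1-j)) • (Mmat r)^(r+1-j) := by
  have h0 := Matrix.aeval_self_charpoly (Mmat r)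
  rw [Polynomial.aeval_eq_sum_range] at h0
  rw [(Mmat r).charpoly_natDegree_eq_dim, Fintype.card_fin] at h0
  rw [Finset.sum_range_succ] at h0
  have hm : (Mmat r).charpoly.coeff (r+1) = 1 := by
    have h := Polynomial.Monic.coeff_natDegree ((Mmat r).charpoly_monic)
    rwa [(Mmat r).charpoly_natDegree_eq_dim, Fintype.card_fin] at h
  rw [hm, one_smul] at h0
  have h1 : (Mmat r)^(r+1)
      = -∑ i ∈ Finset.range (r+1), (Mmat r).charpoly.coeff i • (Mmat r)^i :=
    eq_neg_of_add_eq_zero_right h0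
  rw [h1, ← Finset.sum_neg_distrib]
  refine Finset.sum_nbij' (fun i => r+1-i) (fun j => r+1-j) ?_ ?_ ?_ ?_ ?_
  · intro i hi; simp only [Finset.mem_range] at hi; simp only [Finset.mem_Icc]; omega
  · intro j hj; simp only [Finset.mem_Icc] at hj; simp only [Finset.mem_range]; omega
  · intro i hi; simp only [Finset.mem_range] at hi; omega
  · intro j hj; simp only [Finset.mem_Icc] at hj; omega
  · intro i hi; simp only [Finset.mem_range] at hi
    rw [show r+1-(r+1-i) = i by omega, neg_smul]

lemma S_sum {ι : Type*} (n : ℕ) (t : Finset ι) (g : ι → MvPolynomial (Fin 2) ℝ) :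
    S n (∑ i ∈ t, g i) = ∑ i ∈ t, S n (g i) := by
  unfold S
  simp only [map_sum]
  exact Finset.sum_comm

lemma S_smul (n : ℕ) (c : ℝ) (g : MvPolynomial (Fin 2) ℝ) : S n (c • g) = c * S n g := by
  unfold S
  rw [Finset.mul_sum]
  refine Finset.sum_congr rfl fun k _ => ?_
  rw [smul_eq_C_mul, map_mul, eval_C]

lemma S_rep {r : ℕ} (m : ℕ) {f : MvPolynomial (Fin 2) ℝ} (hf : f.IsHomogeneous r) :
    S m f = dotProduct (fun i : Fin (r+1) => S m (monomial (cvec r i) 1))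
      (fun i : Fin (r+1) => coeff (cvec r i) f) := by
  conv_lhs => rw [hrep hf]
  rw [S_sum]
  simp only [dotProduct, S_smul]
  exact Finset.sum_congr rfl fun i _ => mul_comm _ _

lemma S_iter (k : ℕ) : ∀ (m : ℕ) (g : MvPolynomial (Fin 2) ℝ),
    S (m + 2 + k) g = S (m + 2) ((U^k) g) := by
  induction k with
  | zero => intro m g; simp
  | succ k ih =>
      intro m g
      rw [show m + 2 + (k+1) = (m+1) + 2 + k by ring, ih (m+1) g, S_step,
        pow_succ', Module.End.mul_apply]

lemma dot_sum_smul_mulVec {N : Type*} [Fintype N] [DecidableEq N]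
    (w v : N → ℝ) (c : ℕ → ℝ) (A : ℕ → Matrix N N ℝ) (t : Finset ℕ) :
    dotProduct w ((∑ j ∈ t, c j • A j).mulVec v)
      = ∑ j ∈ t, c j * dotProduct w ((A j).mulVec v) := by
  induction t using Finset.induction with
  | empty => simp [Matrix.zero_mulVec]
  | insert _ _ hj ih =>
      rw [Finset.sum_insert hj, Finset.sum_insert hj, Matrix.add_mulVec,
        dotProduct_add, ih, Matrix.smul_mulVec, dotProduct_smul,
        smul_eq_mul]

open MvPolynomial Finset

/-- For every `r` there exist reals `a_1, …, a_{r+1}` (depending only on `r`) and `N`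
such that for every homogeneous polynomial `f` of degree `r` and every `n ≥ N`,
`S n f = ∑_{j=1}^{r+1} a_j S (n-j) f`. -/
theorem S_linear_recurrence (r : ℕ) :
    ∃ (a : ℕ → ℝ) (N : ℕ), ∀ f : MvPolynomial (Fin 2) ℝ, f.IsHomogeneous r →
      ∀ n : ℕ, N ≤ n → S n f = ∑ j ∈ Finset.Icc 1 (r + 1), a j * S (n - j) f := by
  refine ⟨fun j => -(Mmat r).charpoly.coeff (r+1-j), r+3, ?_⟩
  intro f hf n hn
  set m := n - (r+3) with hm
  have h1 : S n f = S (m+2) ((U^(r+1)) f) := by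
    rw [show n = m + 2 + (r+1) by omega]
    exact S_iter (r+1) (m) f
  have h2 : ∀ j ∈ Finset.Icc 1 (r+1), S (n-j) f = S (m+2) ((U^(r+1-j)) f) := by
    intro j hj
    simp only [Finset.mem_Icc] at hj
    rw [show n - j = m + 2 + (r+1-j) by omega]
    exact S_iter (r+1-j) m f
  rw [h1, Finset.sum_congr rfl fun j hj => by rw [h2 j hj]]
  rw [S_rep (m+2) (pow_isHomogeneous hf (r+1))]
  have h3 : ∀ j, (fun i : Fin (r+1) => coeff (cvec r i) ((U^j) f))
      = ((Mmat r)^j).mulVec (fun i : Fin (r+1) => coeff (cvec r i) f) :=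
    phi_U_pow hf
  rw [h3, CH r, dot_sum_smul_mulVec]
  refine Finset.sum_congr rfl fun j hj => ?_
  congr 1
  rw [S_rep (m+2) (pow_isHomogeneous hf (r+1-j)), h3]
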